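/- Let x_1, …, x_n ∈ ℝ^d, let w* ∈ ℝ^d, and let y_i = w*ᵀx_i + ε_i where ε_1, …, ε_n are independent real random variables with mean 0 and variance σ². Let λ ∼ Beta(α, α) with c_α = E[λ(1−λ)], independent of the ε_i, let R_ERM(w) = (1/n) Σ_i (y_i − wᵀx_i)², and let R_Mixup(w) = E_{i,j,λ}[(λy_i + (1−λ)y_j − wᵀ(λx_i + (1−λ)x_j))²] with i, j independent uniform indices. Define Σ_x = (1/n²) Σ_{i=1}^n Σ_{j=1}^n (x_i − x_j)(x_i − x_j)ᵀ. Then for every w ∈ ℝ^d, E_ε[R_Mixup(w)] − E_ε[R_ERM(w)] = −c_α (w − w*)ᵀ Σ_x (w − w*) − 2c_α σ² (n−1)/n. In particular, Mixup contributes a concave quadratic bonus centered at w*, and w* minimizes E_ε[R_Mixup] whenever it minimizes E_ε[R_ERM]. -/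

import Mathlib

open MeasureTheory ProbabilityTheory Finset

/-!
Pointwise in the mixing coefficient, `(λu + (1-λ)v)² = λu² + (1-λ)v² - λ(1-λ)(u-v)²`, so with
`E λ = 1/2` and residuals `eᵢ = yᵢ - wᵀxᵢ` the Mixup risk is the ERM risk minus
`c/n² Σᵢⱼ (eᵢ - eⱼ)²`, i.e. minus `2c` times the empirical variance of the residuals. Writing
`eᵢ = rᵢ + εᵢ` with the noiseless residual `rᵢ = (w* - w)ᵀxᵢ`, centring and independence of the
noise give `E (eᵢ - eⱼ)² = (rᵢ - rⱼ)² + 2σ² [i ≠ j]`. For the minimiser,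
`Σᵢⱼ (rᵢ - rⱼ)² ≤ 2n Σᵢ rᵢ²` and `c ≤ 1/4` leave the Mixup risk at `w` above its value at `w*`.
-/

/-- Expected (over the label noise `ε`) empirical squared-loss risk of the linear
model `w` when labels are generated as `yᵢ = wstarᵀxᵢ + εᵢ`. -/
noncomputable def noiseErmRisk {Ω : Type*} [MeasurableSpace Ω] (P : Measure Ω)
    (d n : ℕ) (x : Fin n → Fin d → ℝ) (wstar : Fin d → ℝ) (ε : Fin n → Ω → ℝ)
    (w : Fin d → ℝ) : ℝ :=
  ∫ ω, (1 / n : ℝ) * ∑ i,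
    ((∑ k, wstar k * x i k + ε i ω) - ∑ k, w k * x i k) ^ 2 ∂P

/-- Expected (over the label noise `ε`) Mixup risk of the linear model `w`, where
the mixing coefficient `lam` lives on an independent probability space and
`(i, j)` are independent uniform indices. -/
noncomputable def noiseMixupRisk {Ω Ω' : Type*} [MeasurableSpace Ω]
    [MeasurableSpace Ω'] (P : Measure Ω) (P' : Measure Ω')
    (d n : ℕ) (x : Fin n → Fin d → ℝ) (wstar : Fin d → ℝ) (ε : Fin n → Ω → ℝ)
    (lam : Ω' → ℝ) (w : Fin d → ℝ) : ℝ :=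
  ∫ ω, (1 / (n : ℝ) ^ 2) * ∑ i, ∑ j, ∫ ω',
    (lam ω' * (∑ k, wstar k * x i k + ε i ω)
        + (1 - lam ω') * (∑ k, wstar k * x j k + ε j ω)
      - ∑ k, w k * (lam ω' * x i k + (1 - lam ω') * x j k)) ^ 2 ∂P' ∂P

theorem Finset.sum_sum_sub_sq {ι : Type*} (s : Finset ι) (a : ι → ℝ) :
    ∑ i ∈ s, ∑ j ∈ s, (a i - a j) ^ 2
      = 2 * (#s : ℝ) * ∑ i ∈ s, a i ^ 2 - 2 * (∑ i ∈ s, a i) ^ 2 := by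
  simp only [sub_sq, sum_add_distrib, sum_sub_distrib, sum_const, nsmul_eq_mul, ← mul_sum,
    ← sum_mul]
  ring

theorem mul_sum_sum_sub_sq_le {ι : Type*} [Fintype ι] {c : ℝ} (hc : c ∈ Set.Icc (0 : ℝ) (1 / 2))
    (a : ι → ℝ) :
    c * (1 / (Fintype.card ι : ℝ) ^ 2 * ∑ i, ∑ j, (a i - a j) ^ 2)
      ≤ 1 / (Fintype.card ι : ℝ) * ∑ i, a i ^ 2 := by
  rw [sum_sum_sub_sq, card_univ]
  set N : ℝ := (Fintype.card ι : ℝ)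
  rcases eq_or_ne N 0 with hN | hN
  · simp [hN]
  calc c * (1 / N ^ 2 * (2 * N * ∑ i, a i ^ 2 - 2 * (∑ i, a i) ^ 2))
      ≤ c * (1 / N ^ 2 * (2 * N * ∑ i, a i ^ 2)) := by
        gcongr
        · exact hc.1
        · nlinarith [sq_nonneg (∑ i, a i)]
    _ = 2 * c * (1 / N * ∑ i, a i ^ 2) := by
        field_simp
    _ ≤ 1 * (1 / N * ∑ i, a i ^ 2) := by
        gcongr
        linarith [hc.2]
    _ = 1 / N * ∑ i, a i ^ 2 := one_mul _

theorem Finset.sum_sum_ite_eq_zero_else {ι : Type*} [Fintype ι] [DecidableEq ι] (b : ℝ) :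
    ∑ i : ι, ∑ j : ι, (if i = j then 0 else b) = Fintype.card ι * (Fintype.card ι - 1) * b := by
  have h (i j : ι) : (if i = j then 0 else b) = b - if i = j then b else 0 := by
    split_ifs <;> ring
  simp only [h, sum_sub_distrib, sum_ite_eq, mem_univ, if_true, sum_const, card_univ,
    nsmul_eq_mul]
  ring

theorem mix_sub_sum_mul_mix {d : ℕ} (l p q : ℝ) (w u v : Fin d → ℝ) :
    l * p + (1 - l) * q - ∑ k, w k * (l * u k + (1 - l) * v k)
      = l * (p - ∑ k, w k * u k) + (1 - l) * (q - ∑ k, w k * v k) := by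
  simp only [mul_add, sum_add_distrib, mul_left_comm (w _), ← mul_sum]
  ring

theorem mul_one_sub_mem_Icc {l : ℝ} (hl : l ∈ Set.Icc (0 : ℝ) 1) :
    l * (1 - l) ∈ Set.Icc (0 : ℝ) (1 / 4) :=
  ⟨mul_nonneg hl.1 (by linarith [hl.2]), by nlinarith [sq_nonneg (l - 1 / 2)]⟩

section Mixing

variable {Ω' : Type*} [MeasurableSpace Ω'] {P' : Measure Ω'} [IsProbabilityMeasure P']
  {lam : Ω' → ℝ}

theorem integrable_mul_one_sub (hlam : Measurable lam)
    (hlam_mem : ∀ ω', lam ω' ∈ Set.Icc (0 : ℝ) 1) :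
    Integrable (fun ω' => lam ω' * (1 - lam ω')) P' :=
  .of_mem_Icc 0 (1 / 4) (by fun_prop) (.of_forall fun ω' => mul_one_sub_mem_Icc (hlam_mem ω'))

theorem integral_mul_one_sub_mem_Icc (hlam : Measurable lam)
    (hlam_mem : ∀ ω', lam ω' ∈ Set.Icc (0 : ℝ) 1) :
    ∫ ω', lam ω' * (1 - lam ω') ∂P' ∈ Set.Icc (0 : ℝ) (1 / 4) := by
  refine ⟨integral_nonneg fun ω' => (mul_one_sub_mem_Icc (hlam_mem ω')).1, ?_⟩
  calc ∫ ω', lam ω' * (1 - lam ω') ∂P' ≤ ∫ _, 1 / 4 ∂P' :=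
        integral_mono (integrable_mul_one_sub hlam hlam_mem) (integrable_const _)
          fun ω' => (mul_one_sub_mem_Icc (hlam_mem ω')).2
    _ = 1 / 4 := by simp

theorem integral_mix_sq (hlam : Measurable lam) (hlam_mem : ∀ ω', lam ω' ∈ Set.Icc (0 : ℝ) 1)
    (hlam_mean : ∫ ω', lam ω' ∂P' = 1 / 2) (u v : ℝ) :
    ∫ ω', (lam ω' * u + (1 - lam ω') * v) ^ 2 ∂P'
      = (u ^ 2 + v ^ 2) / 2 - (∫ ω', lam ω' * (1 - lam ω') ∂P') * (u - v) ^ 2 := by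
  have hint : Integrable lam P' := .of_mem_Icc 0 1 hlam.aemeasurable (.of_forall hlam_mem)
  have := integrable_mul_one_sub (P' := P') hlam hlam_mem
  calc ∫ ω', (lam ω' * u + (1 - lam ω') * v) ^ 2 ∂P'
      = ∫ ω', (v ^ 2 + (u ^ 2 - v ^ 2) * lam ω' - (u - v) ^ 2 * (lam ω' * (1 - lam ω'))) ∂P' := by
        congr 1 with ω'; ring
    _ = _ := by
      rw [integral_sub, integral_add, integral_const_mul, integral_const_mul, integral_const,
        hlam_mean]
      · simp only [probReal_univ, smul_eq_mul]
        ring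
      all_goals fun_prop

theorem sum_sum_integral_mix_sq {ι : Type*} [Fintype ι] (hlam : Measurable lam)
    (hlam_mem : ∀ ω', lam ω' ∈ Set.Icc (0 : ℝ) 1) (hlam_mean : ∫ ω', lam ω' ∂P' = 1 / 2)
    (e : ι → ℝ) :
    ∑ i, ∑ j, ∫ ω', (lam ω' * e i + (1 - lam ω') * e j) ^ 2 ∂P'
      = Fintype.card ι * ∑ i, e i ^ 2
        - (∫ ω', lam ω' * (1 - lam ω') ∂P') * ∑ i, ∑ j, (e i - e j) ^ 2 := by
  simp only [integral_mix_sq hlam hlam_mem hlam_mean, sum_sub_distrib, ← mul_sum, add_div,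
    sum_add_distrib, sum_const, card_univ, nsmul_eq_mul, ← sum_div]
  ring

end Mixing

section Noise

variable {Ω : Type*} [MeasurableSpace Ω] {μ : Measure Ω}

theorem ProbabilityTheory.IndepFun.integral_sub_sq {X Y : Ω → ℝ} (hXY : IndepFun X Y μ)
    (hX : MemLp X 2 μ) (hY : MemLp Y 2 μ) (hX0 : ∫ ω, X ω ∂μ = 0) :
    ∫ ω, (X ω - Y ω) ^ 2 ∂μ = ∫ ω, X ω ^ 2 ∂μ + ∫ ω, Y ω ^ 2 ∂μ := by
  have hXY0 : ∫ ω, X ω * Y ω ∂μ = 0 := by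
    rw [← Pi.mul_def, hXY.integral_mul_eq_mul_integral hX.aestronglyMeasurable
      hY.aestronglyMeasurable, hX0, zero_mul]
  have : Integrable (fun ω => X ω * Y ω) μ := hX.integrable_mul hY
  have := hX.integrable_sq
  have := hY.integrable_sq
  calc ∫ ω, (X ω - Y ω) ^ 2 ∂μ = ∫ ω, (X ω ^ 2 - 2 * (X ω * Y ω) + Y ω ^ 2) ∂μ := by
        congr 1 with ω; ring
    _ = _ := by
      rw [integral_add, integral_sub, integral_const_mul, hXY0]
      · ring
      all_goals fun_prop

variable {ι : Type*} {ε : ι → Ω → ℝ} {σ : ℝ}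

theorem integral_sub_sq_of_iIndepFun [DecidableEq ι] (hL2 : ∀ i, MemLp (ε i) 2 μ)
    (hindep : iIndepFun ε μ) (hmean : ∀ i, ∫ ω, ε i ω ∂μ = 0)
    (hvar : ∀ i, ∫ ω, ε i ω ^ 2 ∂μ = σ ^ 2) (i j : ι) :
    ∫ ω, (ε i ω - ε j ω) ^ 2 ∂μ = if i = j then 0 else 2 * σ ^ 2 := by
  split_ifs with hij
  · simp [hij]
  · rw [(hindep.indepFun hij).integral_sub_sq (hL2 i) (hL2 j) (hmean i), hvar, hvar]
    ring

variable [IsProbabilityMeasure μ]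

theorem integral_const_add_sq {Z : Ω → ℝ} (hZ : MemLp Z 2 μ) (hZ0 : ∫ ω, Z ω ∂μ = 0) (a : ℝ) :
    ∫ ω, (a + Z ω) ^ 2 ∂μ = a ^ 2 + ∫ ω, Z ω ^ 2 ∂μ := by
  have := hZ.integrable one_le_two
  have := hZ.integrable_sq
  calc ∫ ω, (a + Z ω) ^ 2 ∂μ = ∫ ω, (a ^ 2 + 2 * a * Z ω + Z ω ^ 2) ∂μ := by
        congr 1 with ω; ring
    _ = _ := by
      rw [integral_add, integral_add, integral_const_mul, hZ0]
      · simp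
      all_goals fun_prop

variable [Fintype ι]

theorem integral_sum_const_add_sq (hL2 : ∀ i, MemLp (ε i) 2 μ)
    (hmean : ∀ i, ∫ ω, ε i ω ∂μ = 0) (hvar : ∀ i, ∫ ω, ε i ω ^ 2 ∂μ = σ ^ 2) (a : ι → ℝ) :
    ∫ ω, ∑ i, (a i + ε i ω) ^ 2 ∂μ = ∑ i, a i ^ 2 + Fintype.card ι * σ ^ 2 := by
  rw [integral_finsetSum]
  · simp [integral_const_add_sq (hL2 _) (hmean _), hvar, sum_add_distrib]
  · exact fun i _ => ((memLp_const (a i)).add (hL2 i)).integrable_sq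

theorem integral_sum_sum_sub_sq (hL2 : ∀ i, MemLp (ε i) 2 μ) (hindep : iIndepFun ε μ)
    (hmean : ∀ i, ∫ ω, ε i ω ∂μ = 0) (hvar : ∀ i, ∫ ω, ε i ω ^ 2 ∂μ = σ ^ 2) (a : ι → ℝ) :
    ∫ ω, ∑ i, ∑ j, ((a i + ε i ω) - (a j + ε j ω)) ^ 2 ∂μ
      = ∑ i, ∑ j, (a i - a j) ^ 2
        + Fintype.card ι * (Fintype.card ι - 1) * (2 * σ ^ 2) := by
  classical
  have hint (i j : ι) : Integrable (fun ω => ((a i + ε i ω) - (a j + ε j ω)) ^ 2) μ :=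
    (((memLp_const (a i)).add (hL2 i)).sub ((memLp_const (a j)).add (hL2 j))).integrable_sq
  calc ∫ ω, ∑ i, ∑ j, ((a i + ε i ω) - (a j + ε j ω)) ^ 2 ∂μ
      = ∑ i, ∑ j, ∫ ω, ((a i - a j) + (ε i ω - ε j ω)) ^ 2 ∂μ := by
        rw [integral_finsetSum _ fun i _ => integrable_finsetSum _ fun j _ => hint i j]
        refine sum_congr rfl fun i _ => ?_
        rw [integral_finsetSum _ fun j _ => hint i j]
        refine sum_congr rfl fun j _ => ?_
        congr 1 with ω
        ring
    _ = ∑ i, ∑ j, ((a i - a j) ^ 2 + if i = j then 0 else 2 * σ ^ 2) := by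
        refine sum_congr rfl fun i _ => sum_congr rfl fun j _ => ?_
        have hmean_sub : ∫ ω, (ε i ω - ε j ω) ∂μ = 0 := by
          rw [integral_sub ((hL2 i).integrable one_le_two) ((hL2 j).integrable one_le_two),
            hmean, hmean, sub_zero]
        rw [integral_const_add_sq (Z := fun ω => ε i ω - ε j ω) ((hL2 i).sub (hL2 j)) hmean_sub,
          integral_sub_sq_of_iIndepFun hL2 hindep hmean hvar]
    _ = _ := by
        rw [← sum_sum_ite_eq_zero_else]
        simp only [sum_add_distrib]

end Noise

def noiselessResidual {d n : ℕ} (x : Fin n → Fin d → ℝ) (wstar w : Fin d → ℝ) (i : Fin n) : ℝ :=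
  ∑ k, wstar k * x i k - ∑ k, w k * x i k

theorem noiselessResidual_sub_sq {d n : ℕ} (x : Fin n → Fin d → ℝ) (wstar w : Fin d → ℝ)
    (i j : Fin n) :
    (noiselessResidual x wstar w i - noiselessResidual x wstar w j) ^ 2
      = (∑ k, (w k - wstar k) * (x i k - x j k)) ^ 2 := by
  simp only [noiselessResidual, mul_sub, sub_mul, sum_sub_distrib]
  ring

theorem noiselessResidual_self {d n : ℕ} (x : Fin n → Fin d → ℝ) (wstar : Fin d → ℝ) :
    noiselessResidual x wstar wstar = 0 := by
  ext i
  simp [noiselessResidual]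

section Risks

variable {Ω Ω' : Type*} [MeasurableSpace Ω] [MeasurableSpace Ω'] {P : Measure Ω}
  {P' : Measure Ω'} [IsProbabilityMeasure P] [IsProbabilityMeasure P'] {d n : ℕ}
  {x : Fin n → Fin d → ℝ} {wstar : Fin d → ℝ} {σ : ℝ} {ε : Fin n → Ω → ℝ} {lam : Ω' → ℝ}

omit [MeasurableSpace Ω] in
theorem label_sub_fit (w : Fin d → ℝ) (i : Fin n) (ω : Ω) :
    (∑ k, wstar k * x i k + ε i ω) - ∑ k, w k * x i k
      = noiselessResidual x wstar w i + ε i ω := by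
  unfold noiselessResidual
  ring

theorem noiseErmRisk_eq (hL2 : ∀ i, MemLp (ε i) 2 P) (hmean : ∀ i, ∫ ω, ε i ω ∂P = 0)
    (hvar : ∀ i, ∫ ω, ε i ω ^ 2 ∂P = σ ^ 2) (w : Fin d → ℝ) :
    noiseErmRisk P d n x wstar ε w
      = 1 / n * (∑ i, noiselessResidual x wstar w i ^ 2 + n * σ ^ 2) := by
  simp only [noiseErmRisk, label_sub_fit, integral_const_mul,
    integral_sum_const_add_sq hL2 hmean hvar, Fintype.card_fin]

theorem noiseMixupRisk_eq (hn : 0 < n) (hL2 : ∀ i, MemLp (ε i) 2 P) (hindep : iIndepFun ε P)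
    (hmean : ∀ i, ∫ ω, ε i ω ∂P = 0) (hvar : ∀ i, ∫ ω, ε i ω ^ 2 ∂P = σ ^ 2)
    (hlam_meas : Measurable lam) (hlam_mem : ∀ ω', lam ω' ∈ Set.Icc (0 : ℝ) 1)
    (hlam_mean : ∫ ω', lam ω' ∂P' = 1 / 2) (w : Fin d → ℝ) :
    noiseMixupRisk P P' d n x wstar ε lam w
      = noiseErmRisk P d n x wstar ε w - (∫ ω', lam ω' * (1 - lam ω') ∂P')
          * (1 / (n : ℝ) ^ 2 * (∑ i, ∑ j, (noiselessResidual x wstar w i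
              - noiselessResidual x wstar w j) ^ 2 + n * (n - 1) * (2 * σ ^ 2))) := by
  have hn' : (n : ℝ) ≠ 0 := by positivity
  have hpointwise (ω : Ω) :
      1 / (n : ℝ) ^ 2 * ∑ i, ∑ j, ∫ ω',
        (lam ω' * (∑ k, wstar k * x i k + ε i ω) + (1 - lam ω') * (∑ k, wstar k * x j k + ε j ω)
          - ∑ k, w k * (lam ω' * x i k + (1 - lam ω') * x j k)) ^ 2 ∂P'
      = 1 / n * ∑ i, (noiselessResidual x wstar w i + ε i ω) ^ 2
        - (∫ ω', lam ω' * (1 - lam ω') ∂P') * (1 / (n : ℝ) ^ 2 * ∑ i, ∑ j,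
          ((noiselessResidual x wstar w i + ε i ω)
            - (noiselessResidual x wstar w j + ε j ω)) ^ 2) := by
    simp only [mix_sub_sum_mul_mix, label_sub_fit]
    rw [sum_sum_integral_mix_sq hlam_meas hlam_mem hlam_mean, Fintype.card_fin]
    have hsimpl (A c B : ℝ) :
        1 / (n : ℝ) ^ 2 * (n * A - c * B) = 1 / n * A - c * (1 / n ^ 2 * B) := by
      field_simp
    exact hsimpl _ _ _
  have hsq (i : Fin n) : MemLp (fun ω => noiselessResidual x wstar w i + ε i ω) 2 P :=
    (memLp_const (noiselessResidual x wstar w i)).add (hL2 i)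
  have hmix : noiseMixupRisk P P' d n x wstar ε lam w
      = ∫ ω, (1 / n * ∑ i, (noiselessResidual x wstar w i + ε i ω) ^ 2
        - (∫ ω', lam ω' * (1 - lam ω') ∂P') * (1 / (n : ℝ) ^ 2 * ∑ i, ∑ j,
          ((noiselessResidual x wstar w i + ε i ω)
            - (noiselessResidual x wstar w j + ε j ω)) ^ 2)) ∂P :=
    integral_congr_ae (.of_forall hpointwise)
  rw [hmix, integral_sub, integral_const_mul, integral_const_mul, integral_const_mul,
    integral_sum_const_add_sq hL2 hmean hvar, integral_sum_sum_sub_sq hL2 hindep hmean hvar,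
    noiseErmRisk_eq hL2 hmean hvar, Fintype.card_fin]
  · exact (integrable_finsetSum _ fun i _ => (hsq i).integrable_sq).const_mul _
  · exact ((integrable_finsetSum _ fun i _ => integrable_finsetSum _ fun j _ =>
      ((hsq i).sub (hsq j)).integrable_sq).const_mul _).const_mul _

end Risks

theorem mixup_generative_decomposition_general
    {Ω Ω' : Type*} [MeasurableSpace Ω] [MeasurableSpace Ω']
    (P : Measure Ω) (P' : Measure Ω')
    [IsProbabilityMeasure P] [IsProbabilityMeasure P']
    (d n : ℕ) (hn : 0 < n)
    (x : Fin n → Fin d → ℝ) (wstar : Fin d → ℝ)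
    (σ : ℝ) (ε : Fin n → Ω → ℝ)
    (hL2 : ∀ i, MemLp (ε i) 2 P)
    (hindep : iIndepFun ε P)
    (hmean : ∀ i, ∫ ω, ε i ω ∂P = 0)
    (hvar : ∀ i, ∫ ω, (ε i ω) ^ 2 ∂P = σ ^ 2)
    (lam : Ω' → ℝ) (hlam_meas : Measurable lam)
    (hlam_mem : ∀ ω', lam ω' ∈ Set.Icc (0 : ℝ) 1)
    (hlam_mean : ∫ ω', lam ω' ∂P' = 1 / 2) :
    (∀ w : Fin d → ℝ,
      noiseMixupRisk P P' d n x wstar ε lam w - noiseErmRisk P d n x wstar ε w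
        = -(∫ ω', lam ω' * (1 - lam ω') ∂P')
              * ((1 / (n : ℝ) ^ 2) * ∑ i, ∑ j,
                  (∑ k, (w k - wstar k) * (x i k - x j k)) ^ 2)
          - 2 * (∫ ω', lam ω' * (1 - lam ω') ∂P') * σ ^ 2 * (((n : ℝ) - 1) / n)) ∧
    ((∀ w' : Fin d → ℝ,
        noiseErmRisk P d n x wstar ε wstar ≤ noiseErmRisk P d n x wstar ε w') →
      ∀ w' : Fin d → ℝ,
        noiseMixupRisk P P' d n x wstar ε lam wstar
          ≤ noiseMixupRisk P P' d n x wstar ε lam w') := by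
  have hmix := noiseMixupRisk_eq (x := x) (wstar := wstar) hn hL2 hindep hmean hvar hlam_meas
    hlam_mem hlam_mean
  have hc := integral_mul_one_sub_mem_Icc (P' := P') hlam_meas hlam_mem
  refine ⟨fun w => ?_, fun _ w' => ?_⟩
  · rw [hmix w]
    simp only [noiselessResidual_sub_sq]
    field_simp
    ring
  · rw [hmix, hmix, noiseErmRisk_eq hL2 hmean hvar, noiseErmRisk_eq hL2 hmean hvar,
      noiselessResidual_self]
    have hbound := mul_sum_sum_sub_sq_le ⟨hc.1, hc.2.trans (by norm_num)⟩
      (noiselessResidual x wstar w')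
    simp only [Fintype.card_fin] at hbound
    simp only [Pi.zero_apply, sub_self, ne_eq, OfNat.ofNat_ne_zero, not_false_eq_true,
      zero_pow, sum_const_zero]
    linear_combination hbound

/-- **Mixup under the generative linear model.**
If `yᵢ = wstarᵀxᵢ + εᵢ` with independent mean-zero noise of variance `σ²`, and
`lam` is `[0,1]`-valued with mean `1/2` (as for `Beta(α,α)`) on an independent
probability space, then with `c = E[lam(1-lam)]` and
`Σ_x = (1/n²) Σᵢⱼ (xᵢ-xⱼ)(xᵢ-xⱼ)ᵀ`,
`E_ε[R_Mixup(w)] - E_ε[R_ERM(w)] = -c (w-w*)ᵀΣ_x(w-w*) - 2cσ²(n-1)/n`;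
in particular `w*` minimizes `E_ε[R_Mixup]` whenever it minimizes `E_ε[R_ERM]`. -/
theorem mixup_generative_decomposition
    {Ω Ω' : Type*} [MeasurableSpace Ω] [MeasurableSpace Ω']
    (P : Measure Ω) (P' : Measure Ω')
    [IsProbabilityMeasure P] [IsProbabilityMeasure P']
    (d n : ℕ) (hn : 0 < n)
    (x : Fin n → Fin d → ℝ) (wstar : Fin d → ℝ)
    (σ : ℝ) (ε : Fin n → Ω → ℝ)
    (hmeas : ∀ i, Measurable (ε i))
    (hL2 : ∀ i, MemLp (ε i) 2 P)
    (hindep : iIndepFun ε P)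
    (hmean : ∀ i, ∫ ω, ε i ω ∂P = 0)
    (hvar : ∀ i, ∫ ω, (ε i ω) ^ 2 ∂P = σ ^ 2)
    (lam : Ω' → ℝ) (hlam_meas : Measurable lam)
    (hlam_mem : ∀ ω', lam ω' ∈ Set.Icc (0 : ℝ) 1)
    (hlam_mean : ∫ ω', lam ω' ∂P' = 1 / 2) :
    (∀ w : Fin d → ℝ,
      noiseMixupRisk P P' d n x wstar ε lam w - noiseErmRisk P d n x wstar ε w
        = -(∫ ω', lam ω' * (1 - lam ω') ∂P')
              * ((1 / (n : ℝ) ^ 2) * ∑ i, ∑ j,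
                  (∑ k, (w k - wstar k) * (x i k - x j k)) ^ 2)
          - 2 * (∫ ω', lam ω' * (1 - lam ω') ∂P') * σ ^ 2 * (((n : ℝ) - 1) / n)) ∧
    ((∀ w' : Fin d → ℝ,
        noiseErmRisk P d n x wstar ε wstar ≤ noiseErmRisk P d n x wstar ε w') →
      ∀ w' : Fin d → ℝ,
        noiseMixupRisk P P' d n x wstar ε lam wstar
          ≤ noiseMixupRisk P P' d n x wstar ε lam w') :=
  mixup_generative_decomposition_general P P' d n hn x wstar σ ε hL2 hindep hmean hvar lam hlam_meas
    hlam_mem hlam_mean
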